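/- arXiv:1706.00075 — 8 statements merged into one kernel-verified Lean document; each statement's English description precedes it below -/
import Mathlib

section
/- Let G be a group, let H₁ and H₂ be subgroups of G, and let N be a normal subgroup of G. If H₁ and H₂ are locally conjugate in G, then H₁ ∩ N and H₂ ∩ N are locally conjugate in G. -/
/-- Subgroups `H₁` and `H₂` of a group `G` are locally conjugate in `G` if there is a
bijection `f : H₁ → H₂` such that `h` and `f h` are conjugate in `G` for every `h ∈ H₁`. -/
def IsLocallyConjugate {G : Type*} [Group G] (H₁ H₂ : Subgroup G) : Prop :=
  ∃ f : H₁ ≃ H₂, ∀ h : H₁, IsConj (h : G) ((f h : G))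

theorem Subgroup.Normal.mem_of_isConj {G : Type*} [Group G] {N : Subgroup G} (hN : N.Normal)
    {x y : G} (hxy : IsConj x y) (hx : x ∈ N) : y ∈ N := by
  obtain ⟨c, rfl⟩ := isConj_iff.mp hxy
  exact hN.conj_mem x hx c

theorem Subgroup.Normal.mem_iff_of_isConj {G : Type*} [Group G] {N : Subgroup G} (hN : N.Normal)
    {x y : G} (hxy : IsConj x y) : x ∈ N ↔ y ∈ N :=
  ⟨hN.mem_of_isConj hxy, hN.mem_of_isConj hxy.symm⟩

def Subgroup.infEquivSubtype {G : Type*} [Group G] (H N : Subgroup G) :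
    ↥(H ⊓ N) ≃ {x : H // (x : G) ∈ N} :=
  (Equiv.subtypeSubtypeEquivSubtypeInter (· ∈ H) (· ∈ N)).symm

/-- If `H₁` and `H₂` are locally conjugate in `G` and `N ⊴ G`, then
`H₁ ∩ N` and `H₂ ∩ N` are locally conjugate in `G`. -/
theorem locallyConjugate_inf_normal
    {G : Type*} [Group G] (H₁ H₂ N : Subgroup G) (hN : N.Normal)
    (h : IsLocallyConjugate H₁ H₂) :
    IsLocallyConjugate (H₁ ⊓ N) (H₂ ⊓ N) := by
  obtain ⟨f, hf⟩ := h
  let fN : {x : H₁ // (x : G) ∈ N} ≃ {y : H₂ // (y : G) ∈ N} :=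
    f.subtypeEquiv fun x => hN.mem_iff_of_isConj (hf x)
  exact ⟨(H₁.infEquivSubtype N).trans (fN.trans (H₂.infEquivSubtype N).symm),
    fun x => hf ⟨x, x.2.1⟩⟩
end

section
/- Let G and G' be finite groups, let H₁ and H₂ be subgroups of G, and let φ : G → G' be a surjective group homomorphism. If H₁ and H₂ are locally conjugate in G, then the images φ(H₁) and φ(H₂) are locally conjugate in G'. -/
theorem MonoidHom.card_subtype_comp_of_surjective {A B : Type*} [Group A] [Group B]
    (ψ : A →* B) (hψ : Function.Surjective ψ) (P : B → Prop) :
    Nat.card {a : A // P (ψ a)} = Nat.card ψ.ker * Nat.card {b : B // P b} := by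
  let e := QuotientGroup.quotientKerEquivOfSurjective ψ hψ
  calc Nat.card {a : A // P (ψ a)}
      = Nat.card (ψ.ker × {q : A ⧸ ψ.ker // P (e q)}) :=
        Nat.card_congr (QuotientGroup.preimageMkEquivSubgroupProdSet ψ.ker {q | P (e q)})
    _ = Nat.card ψ.ker * Nat.card {b : B // P b} := by
        rw [Nat.card_prod]
        exact congrArg _ (Nat.card_congr (e.toEquiv.subtypeEquiv fun _ => Iff.rfl))

theorem Subgroup.card_subtype_comp_eq_mul_card_map {G G' : Type*} [Group G] [Group G']
    (φ : G →* G') (H : Subgroup G) (P : G' → Prop) :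
    Nat.card {x : H // P (φ x)} = Nat.card {x : H // φ x = 1} * Nat.card {y : H.map φ // P y} := by
  calc Nat.card {x : H // P (φ x)}
      = Nat.card (φ.subgroupMap H).ker * Nat.card {y : H.map φ // P y} :=
        (φ.subgroupMap H).card_subtype_comp_of_surjective (φ.subgroupMap_surjective H) (P ·)
    _ = _ := congrArg (· * _) (Nat.card_congr (Equiv.subtypeEquivRight fun _ => Subtype.ext_iff))

namespace IsLocallyConjugate

variable {G : Type*} [Group G] {H₁ H₂ : Subgroup G}

theorem card_subtype_eq (h : IsLocallyConjugate H₁ H₂) {P : G → Prop}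
    (hP : ∀ ⦃a b⦄, IsConj a b → (P a ↔ P b)) :
    Nat.card {x : H₁ // P x} = Nat.card {x : H₂ // P x} := by
  obtain ⟨f, hf⟩ := h
  exact Nat.card_congr (f.subtypeEquiv fun x => hP (hf x))

theorem of_card_conjClasses_eq [Finite H₁] [Finite H₂]
    (h : ∀ c : ConjClasses G, Nat.card {x : H₁ // ConjClasses.mk (x : G) = c} =
      Nat.card {x : H₂ // ConjClasses.mk (x : G) = c}) :
    IsLocallyConjugate H₁ H₂ := by
  let e c := (Finite.card_eq.mp (h c)).some
  exact ⟨.ofFiberEquiv e, fun x =>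
    ConjClasses.mk_eq_mk_iff_isConj.mp (Equiv.ofFiberEquiv_map e x).symm⟩

end IsLocallyConjugate

theorem locallyConjugate_map_of_surjective_general
    {G G' : Type*} [Group G] [Group G'] [Finite G] [Finite G']
    (H₁ H₂ : Subgroup G) (φ : G →* G')
    (h : IsLocallyConjugate H₁ H₂) :
    IsLocallyConjugate (H₁.map φ) (H₂.map φ) := by
  refine IsLocallyConjugate.of_card_conjClasses_eq fun c => ?_
  have hker := h.card_subtype_eq (P := fun x => φ x = 1) fun a b hab =>
    ⟨fun ha => isConj_one_right.mp (ha ▸ φ.map_isConj hab),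
      fun hb => isConj_one_left.mp (hb ▸ φ.map_isConj hab)⟩
  have hclass := h.card_subtype_eq (P := fun x => ConjClasses.mk (φ x) = c) fun a b hab => by
    simp only [ConjClasses.mk_eq_mk_iff_isConj.mpr (φ.map_isConj hab)]
  rw [H₁.card_subtype_comp_eq_mul_card_map φ (ConjClasses.mk · = c),
    H₂.card_subtype_comp_eq_mul_card_map φ (ConjClasses.mk · = c), hker] at hclass
  exact Nat.eq_of_mul_eq_mul_left (Nat.card_pos_iff.mpr ⟨⟨1, map_one φ⟩, inferInstance⟩) hclass

/-- If `G, G'` are finite groups, `φ : G →* G'` is surjective and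
`H₁, H₂ ≤ G` are locally conjugate in `G`, then `φ(H₁)` and `φ(H₂)` are locally
conjugate in `G'`. -/
theorem locallyConjugate_map_of_surjective
    {G G' : Type*} [Group G] [Group G'] [Finite G] [Finite G']
    (H₁ H₂ : Subgroup G) (φ : G →* G') (hφ : Function.Surjective φ)
    (h : IsLocallyConjugate H₁ H₂) :
    IsLocallyConjugate (H₁.map φ) (H₂.map φ) :=
  locallyConjugate_map_of_surjective_general H₁ H₂ φ h
end

section
/- Let G be a group and let H₁ and H₂ be finite subgroups of G that are locally conjugate in G. If H₁ is cyclic, then H₂ is cyclic and H₁ and H₂ are conjugate in G, i.e. there exists g ∈ G with gH₁g⁻¹ = H₂. -/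
open Subgroup

theorem Subgroup.zpowers_eq_of_orderOf_eq_natCard {G : Type*} [Group G] {H : Subgroup G}
    [Finite H] {y : G} (hy : y ∈ H) (hord : orderOf y = Nat.card H) : zpowers y = H :=
  eq_of_le_of_card_ge (zpowers_le.mpr hy) (by rw [Nat.card_zpowers, hord])

theorem IsLocallyConjugate.exists_zpowers_conj_eq {G : Type*} [Group G] {x : G}
    {H : Subgroup G} [Finite H] (h : IsLocallyConjugate (zpowers x) H) :
    ∃ g : G, zpowers (g * x * g⁻¹) = H := by
  obtain ⟨f, hf⟩ := h
  let x' : zpowers x := ⟨x, mem_zpowers x⟩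
  obtain ⟨g, hg⟩ := isConj_iff.mp (hf x')
  refine ⟨g, zpowers_eq_of_orderOf_eq_natCard (hg ▸ (f x').2) ?_⟩
  calc orderOf (g * x * g⁻¹) = orderOf x := (MulAut.conj g).orderOf_eq x
    _ = Nat.card (zpowers x) := (Nat.card_zpowers x).symm
    _ = Nat.card H := Nat.card_congr f

theorem locallyConjugate_cyclic_general
    {G : Type*} [Group G] (H₁ H₂ : Subgroup G) [Finite H₂]
    (h : IsLocallyConjugate H₁ H₂) (hc : IsCyclic H₁) :
    IsCyclic H₂ ∧ ∃ g : G, Subgroup.map (MulAut.conj g).toMonoidHom H₁ = H₂ := by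
  obtain ⟨x, rfl⟩ := (H₁.isCyclic_iff_exists_zpowers_eq_top).mp hc
  obtain ⟨g, rfl⟩ := h.exists_zpowers_conj_eq
  exact ⟨inferInstance, g, MonoidHom.map_zpowers _ x⟩

/-- If `H₁, H₂` are finite locally conjugate subgroups of `G` and `H₁`
is cyclic, then `H₂` is cyclic and `H₁` and `H₂` are conjugate in `G`. -/
theorem locallyConjugate_cyclic
    {G : Type*} [Group G] (H₁ H₂ : Subgroup G) [Finite H₁] [Finite H₂]
    (h : IsLocallyConjugate H₁ H₂) (hc : IsCyclic H₁) :
    IsCyclic H₂ ∧ ∃ g : G, Subgroup.map (MulAut.conj g).toMonoidHom H₁ = H₂ :=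
  locallyConjugate_cyclic_general H₁ H₂ h hc
end

section
/- Let A₁ and A₂ be 2×2 matrices over ℤ/p²ℤ, and set κᵢ = 1 + p·Aᵢ for i = 1, 2; each κᵢ is invertible and hence an element of GL₂(ℤ/p²ℤ). Then κ₁ and κ₂ are conjugate in GL₂(ℤ/p²ℤ) if and only if the entrywise reductions of A₁ and A₂ modulo p are conjugate by an element of GL₂(ℤ/pℤ), i.e. there exists g ∈ GL₂(ℤ/pℤ) with g·(A₁ mod p)·g⁻¹ = (A₂ mod p). -/
open Matrix

/-- `GL₂(ℤ/nℤ)`. -/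
abbrev GL2 (n : ℕ) : Type := GL (Fin 2) (ZMod n)

/-- Reduction modulo `p` from `ℤ/p²ℤ` to `ℤ/pℤ`. -/
def red (p : ℕ) : ZMod (p^2) →+* ZMod p :=
  ZMod.castHom (dvd_pow_self p (by norm_num)) (ZMod p)

/-- The natural homomorphism `φ : GL₂(ℤ/p²ℤ) →* GL₂(ℤ/pℤ)` given by entrywise
reduction modulo `p`. -/
def phi (p : ℕ) : GL2 (p^2) →* GL2 p :=
  Matrix.GeneralLinearGroup.map (red p)

/-- The element `1 + p • A` of `GL₂(ℤ/p²ℤ)` (its inverse is `1 - p • A`). -/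
def kerUnit {p : ℕ} (A : Matrix (Fin 2) (Fin 2) (ZMod (p^2))) : GL2 (p^2) where
  val := 1 + (p : ZMod (p^2)) • A
  inv := 1 - (p : ZMod (p^2)) • A
  val_inv := by
    have h : ((p : ZMod (p^2)) • A) * ((p : ZMod (p^2)) • A) = 0 := by
      rw [smul_mul_assoc, mul_smul_comm, smul_smul, ← Nat.cast_mul, ← pow_two,
        ZMod.natCast_self, zero_smul]
    rw [add_mul, one_mul, mul_sub, mul_one, h, sub_zero]
    abel
  inv_val := by
    have h : ((p : ZMod (p^2)) • A) * ((p : ZMod (p^2)) • A) = 0 := by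
      rw [smul_mul_assoc, mul_smul_comm, smul_smul, ← Nat.cast_mul, ← pow_two,
        ZMod.natCast_self, zero_smul]
    rw [sub_mul, one_mul, mul_add, mul_one, h, add_zero]
    abel

/-- The antidiagonal swap matrix `!![0,1;1,0]` as an element of `GL₂(ℤ/p²ℤ)`. -/
def swapGL (p : ℕ) : GL2 (p^2) where
  val := !![0, 1; 1, 0]
  inv := !![0, 1; 1, 0]
  val_inv := by
    ext i j
    fin_cases i <;> fin_cases j <;>
      simp [Matrix.mul_apply, Fin.sum_univ_succ, Matrix.one_apply]
  inv_val := by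
    ext i j
    fin_cases i <;> fin_cases j <;>
      simp [Matrix.mul_apply, Fin.sum_univ_succ, Matrix.one_apply]

/-- Subgroups `H₁` and `H₂` of `G` are conjugate in `G`: `g H₁ g⁻¹ = H₂` for some `g`. -/
def IsConjugateSubgroup {G : Type*} [Group G] (H₁ H₂ : Subgroup G) : Prop :=
  ∃ g : G, Subgroup.map (MulAut.conj g).toMonoidHom H₁ = H₂

/-- Nontrivially locally conjugate: locally conjugate but not conjugate. -/
def IsNontriviallyLocallyConjugate {G : Type*} [Group G] (H₁ H₂ : Subgroup G) : Prop :=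
  IsLocallyConjugate H₁ H₂ ∧ ¬ IsConjugateSubgroup H₁ H₂

/-!
Since `p² = 0` in `ℤ/p²ℤ`, conjugating `1 + p • A` by `G` gives `1 + p • (G A G⁻¹)`, and
`1 + p • A` only remembers `A` modulo `p`. Hence `κ₁` and `κ₂` are conjugate iff some `G` conjugates
`A₁ mod p` to `A₂ mod p` through its reduction `φ G`, and every `g ∈ GL₂(ℤ/pℤ)` is such a
reduction: a matrix is invertible iff its determinant is, and `x ∈ ℤ/p²ℤ` is a unit iff
`x mod p` is, so reduction is a local homomorphism and units lift.
-/

namespace Matrix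

theorem map_surjective {m n α β : Type*} {f : α → β} (hf : Function.Surjective f) :
    Function.Surjective fun M : Matrix m n α => M.map f :=
  fun N => ⟨N.map (Function.surjInv hf), by ext; simp [Function.surjInv_eq]⟩

variable {n R S : Type*} [Fintype n] [DecidableEq n] [CommRing R] [CommRing S]

instance isLocalHom_mapMatrix (f : R →+* S) [IsLocalHom f] :
    IsLocalHom (f.mapMatrix : Matrix n n R →+* Matrix n n S) where
  map_nonunit M hM := by
    rw [isUnit_iff_isUnit_det, ← RingHom.map_det] at hM
    rw [isUnit_iff_isUnit_det]
    exact isUnit_of_map_unit f _ hM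

namespace GeneralLinearGroup

theorem map_surjective (f : R →+* S) [IsLocalHom f] (hf : Function.Surjective f) :
    Function.Surjective (map f : GL n R →* GL n S) :=
  IsLocalRing.surjective_units_map_of_local_ringHom (f.mapMatrix : Matrix n n R →+* Matrix n n S)
    (Matrix.map_surjective hf) inferInstance

theorem map_conj (f : R →+* S) (g : GL n R) (A : Matrix n n R) :
    ((g : Matrix n n R) * A * (g⁻¹ : GL n R)).map f =
      (map f g : Matrix n n S) * A.map f * ((map f g)⁻¹ : GL n S) := by
  rw [← GeneralLinearGroup.map_inv, Matrix.map_mul, Matrix.map_mul]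
  rfl

end GeneralLinearGroup

end Matrix

section red

variable {p : ℕ} [NeZero p]

theorem isUnit_red_iff (x : ZMod (p ^ 2)) : IsUnit (red p x) ↔ IsUnit x := by
  rw [← ZMod.natCast_zmod_val x, map_natCast, ZMod.isUnit_iff_coprime, ZMod.isUnit_iff_coprime,
    Nat.coprime_pow_right_iff two_pos]

instance isLocalHom_red : IsLocalHom (red p) :=
  ⟨fun x => (isUnit_red_iff x).mp⟩

theorem phi_surjective : Function.Surjective (phi p) :=
  Matrix.GeneralLinearGroup.map_surjective (red p) (ZMod.ringHom_surjective _)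

theorem natCast_mul_eq_zero_iff (z : ZMod (p ^ 2)) :
    (p : ZMod (p ^ 2)) * z = 0 ↔ red p z = 0 := by
  have hdvd (k : ℕ) : p ^ 2 ∣ p * k ↔ p ∣ k := by
    rw [pow_two, Nat.mul_dvd_mul_iff_left (NeZero.pos p)]
  rw [← ZMod.natCast_zmod_val z, map_natCast, ← Nat.cast_mul, ZMod.natCast_eq_zero_iff,
    ZMod.natCast_eq_zero_iff, hdvd]

theorem natCast_mul_eq_iff (x y : ZMod (p ^ 2)) :
    (p : ZMod (p ^ 2)) * x = (p : ZMod (p ^ 2)) * y ↔ red p x = red p y := by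
  rw [← sub_eq_zero, ← mul_sub, natCast_mul_eq_zero_iff, map_sub, sub_eq_zero]

theorem natCast_smul_eq_iff {m n : Type*} (M N : Matrix m n (ZMod (p ^ 2))) :
    (p : ZMod (p ^ 2)) • M = (p : ZMod (p ^ 2)) • N ↔ M.map (red p) = N.map (red p) := by
  simp only [← Matrix.ext_iff, Matrix.smul_apply, smul_eq_mul, natCast_mul_eq_iff,
    Matrix.map_apply]

end red

theorem conj_kerUnit {p : ℕ} (G : GL2 (p ^ 2)) (A : Matrix (Fin 2) (Fin 2) (ZMod (p ^ 2))) :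
    G * kerUnit A * G⁻¹ = kerUnit ((G : Matrix (Fin 2) (Fin 2) (ZMod (p ^ 2))) * A *
      ((G⁻¹ : GL2 (p ^ 2)) : Matrix (Fin 2) (Fin 2) (ZMod (p ^ 2)))) := by
  ext1
  simp only [Units.val_mul, kerUnit, mul_add, add_mul, mul_one, Units.mul_inv, mul_smul_comm,
    smul_mul_assoc]

theorem kerUnit_eq_kerUnit_iff {p : ℕ} [NeZero p] (A B : Matrix (Fin 2) (Fin 2) (ZMod (p ^ 2))) :
    kerUnit A = kerUnit B ↔ A.map (red p) = B.map (red p) := by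
  rw [Units.ext_iff, ← natCast_smul_eq_iff]
  exact add_right_inj 1

theorem kerUnit_isConj_iff_general {p : ℕ} [Fact p.Prime]
    (A₁ A₂ : Matrix (Fin 2) (Fin 2) (ZMod (p^2))) :
    IsConj (kerUnit A₁) (kerUnit A₂) ↔
      ∃ g : GL (Fin 2) (ZMod p),
        (↑g : Matrix (Fin 2) (Fin 2) (ZMod p)) * A₁.map (red p) *
          (↑g⁻¹ : Matrix (Fin 2) (Fin 2) (ZMod p)) = A₂.map (red p) := by
  calc IsConj (kerUnit A₁) (kerUnit A₂)
      ↔ ∃ G : GL2 (p ^ 2),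
          ((G : Matrix (Fin 2) (Fin 2) (ZMod (p ^ 2))) * A₁ *
            ((G⁻¹ : GL2 (p ^ 2)) : Matrix (Fin 2) (Fin 2) (ZMod (p ^ 2)))).map (red p) =
            A₂.map (red p) := by
        simp only [isConj_iff, conj_kerUnit, kerUnit_eq_kerUnit_iff]
    _ ↔ ∃ G : GL2 (p ^ 2), ↑(phi p G) * A₁.map (red p) * ↑(phi p G)⁻¹ = A₂.map (red p) := by
        simp only [phi, Matrix.GeneralLinearGroup.map_conj]
    _ ↔ _ := by rw [(phi_surjective (p := p)).exists]

/-- For 2×2 matrices `A₁, A₂` over `ℤ/p²ℤ`, the elements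
`κᵢ = 1 + p • Aᵢ` of `GL₂(ℤ/p²ℤ)` are conjugate in `GL₂(ℤ/p²ℤ)` iff the reductions of
`A₁` and `A₂` mod `p` are conjugate by an element of `GL₂(ℤ/pℤ)`. -/
theorem kerUnit_isConj_iff {p : ℕ} [Fact p.Prime] (hp : Odd p)
    (A₁ A₂ : Matrix (Fin 2) (Fin 2) (ZMod (p^2))) :
    IsConj (kerUnit A₁) (kerUnit A₂) ↔
      ∃ g : GL (Fin 2) (ZMod p),
        (↑g : Matrix (Fin 2) (Fin 2) (ZMod p)) * A₁.map (red p) *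
          (↑g⁻¹ : Matrix (Fin 2) (Fin 2) (ZMod p)) = A₂.map (red p) :=
  kerUnit_isConj_iff_general A₁ A₂
end

section
/- Let H₁ and H₂ be subgroups of GL₂(ℤ/p²ℤ). If H₁ ∩ ker φ = H₂ ∩ ker φ, φ(H₁) = φ(H₂), and p does not divide the order of φ(H₁), then H₁ and H₂ are conjugate in GL₂(ℤ/p²ℤ): there exists g ∈ GL₂(ℤ/p²ℤ) with gH₁g⁻¹ = H₂. -/
open Matrix

/-!
The kernel of reduction `ker φ = {1 + p A}` is abelian of exponent `p`, since `(p A) (p B) = 0`.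
Lift every `q` in `Q = φ(H₁) = φ(H₂)` to `s q ∈ H₁` and `t q ∈ H₂`. The differences
`u q = t q (s q)⁻¹` form a 1-cocycle of `Q` with values in `ker φ ⧸ (H₁ ∩ ker φ)`, on which `q`
acts by conjugation with `s q`. As `|Q|` is prime to `p`, averaging over `Q` shows that `u` is a
coboundary `u q = n (s q) n⁻¹ (s q)⁻¹`, so conjugation by `n` maps every `s q` into `H₂`, hence
`H₁` into `H₂`; it maps `H₁` onto `H₂` since both have the same image and the same intersection
with `ker φ`.
-/

lemma exists_zpow_pow_eq_self {V : Type*} [Group V] {m e : ℕ} (hexp : ∀ v : V, v ^ e = 1)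
    (hcop : m.Coprime e) : ∃ a : ℤ, ∀ v : V, (v ^ m) ^ a = v := by
  refine ⟨m.gcdA e, fun v => ?_⟩
  have hbezout : (1 : ℤ) = m * m.gcdA e + e * m.gcdB e := by
    rw [← Nat.gcd_eq_gcd_ab, hcop.gcd_eq_one, Nat.cast_one]
  calc (v ^ m) ^ m.gcdA e = (v ^ m) ^ m.gcdA e * (v ^ e) ^ m.gcdB e := by
        rw [hexp, _root_.one_zpow, mul_one]
    _ = v := by
        rw [← _root_.zpow_natCast, ← _root_.zpow_natCast, ← _root_.zpow_mul, ← _root_.zpow_mul,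
          ← _root_.zpow_add, ← hbezout, _root_.zpow_one]

theorem exists_eq_mul_inv_of_cocycle {Q V : Type*} [Group Q] [Finite Q] [CommGroup V] {e : ℕ}
    (hexp : ∀ v : V, v ^ e = 1) (hcop : (Nat.card Q).Coprime e) (σ : Q → V →* V) (u : Q → V)
    (hu : ∀ q r, u (q * r) = u q * σ q (u r)) : ∃ n : V, ∀ q, u q = n * (σ q n)⁻¹ := by
  have := Fintype.ofFinite Q
  obtain ⟨a, ha⟩ := exists_zpow_pow_eq_self hexp hcop
  set c := ∏ r, u r
  refine ⟨c ^ a, fun q => ?_⟩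
  have hc : c = u q ^ Nat.card Q * σ q c := by
    calc c = ∏ r, u (q * r) := (Fintype.prod_equiv (Equiv.mulLeft q) _ _ fun _ => rfl).symm
      _ = u q ^ Nat.card Q * σ q c := by
        simp only [hu, Finset.prod_mul_distrib, Finset.prod_const, Finset.card_univ,
          Nat.card_eq_fintype_card, map_prod, c]
  calc u q = (u q ^ Nat.card Q) ^ a := (ha _).symm
    _ = (c * (σ q c)⁻¹) ^ a := by rw [eq_mul_inv_of_mul_eq hc.symm]
    _ = c ^ a * (σ q (c ^ a))⁻¹ := by rw [mul_zpow, _root_.inv_zpow, map_zpow]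

open scoped IsMulCommutative

namespace Subgroup

variable {G G' : Type*} [Group G] [Group G'] {φ : G →* G'}

lemma eq_of_le_of_map_le_of_inf_ker_le {A B : Subgroup G} (hAB : A ≤ B)
    (hmap : B.map φ ≤ A.map φ) (hker : B ⊓ φ.ker ≤ A) : A = B := by
  refine le_antisymm hAB fun b hb => ?_
  obtain ⟨a, ha, hab⟩ := hmap (mem_map_of_mem φ hb)
  have hab' : a⁻¹ * b ∈ B ⊓ φ.ker :=
    ⟨B.mul_mem (B.inv_mem (hAB ha)) hb, by simp [hab]⟩
  simpa using A.mul_mem ha (hker hab')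

lemma map_conj_le_of_forall_exists_conj_mem [IsMulCommutative φ.ker] {H₁ H₂ : Subgroup G}
    (hker : H₁ ⊓ φ.ker ≤ H₂) {n : G} (hn : n ∈ φ.ker)
    (hlift : ∀ h ∈ H₁, ∃ s ∈ H₁, φ s = φ h ∧ n * s * n⁻¹ ∈ H₂) :
    H₁.map (MulAut.conj n).toMonoidHom ≤ H₂ := by
  rintro _ ⟨h, hh, rfl⟩
  obtain ⟨s, hs, hφ, hconj⟩ := hlift h hh
  have hk : s⁻¹ * h ∈ H₁ ⊓ φ.ker := ⟨H₁.mul_mem (H₁.inv_mem hs) hh, by simp [hφ]⟩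
  have hcomm : n * (s⁻¹ * h) = s⁻¹ * h * n := setLike_mul_comm hn hk.2
  have : n * h * n⁻¹ = n * s * n⁻¹ * (s⁻¹ * h) := by
    calc n * h * n⁻¹ = n * s * n⁻¹ * (n * (s⁻¹ * h) * n⁻¹) := by group
      _ = n * s * n⁻¹ * (s⁻¹ * h) := by rw [hcomm, mul_inv_cancel_right]
  simpa [this] using H₂.mul_mem hconj (hker hk)

variable (φ) in
def kerQuotientConj [IsMulCommutative φ.ker] (H : Subgroup G) {g : G} (hg : g ∈ H) :
    φ.ker ⧸ H.subgroupOf φ.ker →* φ.ker ⧸ H.subgroupOf φ.ker :=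
  QuotientGroup.map _ _ (MulAut.conjNormal g).toMonoidHom fun x hx => by
    simpa [mem_subgroupOf] using H.mul_mem (H.mul_mem hg hx) (H.inv_mem hg)

lemma kerQuotientConj_mk [IsMulCommutative φ.ker] {H : Subgroup G} {g : G} (hg : g ∈ H)
    (x : φ.ker) : kerQuotientConj φ H hg x = (MulAut.conjNormal g x : φ.ker) :=
  rfl

lemma kerQuotient_mk_eq_mk_iff {H : Subgroup G} (x y : φ.ker) :
    (x : φ.ker ⧸ H.subgroupOf φ.ker) = y ↔ (x : G)⁻¹ * y ∈ H := by
  rw [QuotientGroup.eq, mem_subgroupOf, coe_mul, coe_inv]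

lemma kerQuotient_pow_eq_one [IsMulCommutative φ.ker] {e : ℕ} (hexp : ∀ x ∈ φ.ker, x ^ e = 1)
    {H : Subgroup G} (v : φ.ker ⧸ H.subgroupOf φ.ker) : v ^ e = 1 :=
  QuotientGroup.induction_on v fun x => by
    rw [← QuotientGroup.mk_pow, (Subtype.ext (by simpa using hexp x x.2) : x ^ e = 1),
      QuotientGroup.mk_one]

lemma exists_mem_ker_forall_exists_conj_mem [IsMulCommutative φ.ker] {e : ℕ}
    (hexp : ∀ x ∈ φ.ker, x ^ e = 1) {H₁ H₂ : Subgroup G} (hker : H₁ ⊓ φ.ker = H₂ ⊓ φ.ker)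
    (him : H₁.map φ = H₂.map φ) [Finite (H₁.map φ)] (hcop : (Nat.card (H₁.map φ)).Coprime e) :
    ∃ n ∈ φ.ker, ∀ h ∈ H₁, ∃ s ∈ H₁, φ s = φ h ∧ n * s * n⁻¹ ∈ H₂ := by
  set Q := H₁.map φ
  have hH₂H₁ : ∀ x ∈ H₂, φ x = 1 → x ∈ H₁ := fun x hx hφx =>
    (hker.ge ⟨hx, hφx⟩ : x ∈ H₁ ⊓ φ.ker).1
  have hH₁H₂ : ∀ x ∈ H₁, φ x = 1 → x ∈ H₂ := fun x hx hφx =>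
    (hker.le ⟨hx, hφx⟩ : x ∈ H₂ ⊓ φ.ker).1
  choose s hs hφs using fun q : Q => mem_map.mp q.2
  choose t ht hφt using fun q : Q => mem_map.mp (him ▸ q.2 : (q : G') ∈ H₂.map φ)
  have hts : ∀ q, t q * (s q)⁻¹ ∈ φ.ker := fun q => by simp [hφs, hφt]
  let V := φ.ker ⧸ H₁.subgroupOf φ.ker
  let σ : Q → V →* V := fun q => kerQuotientConj φ H₁ (hs q)
  let u : Q → V := fun q => (⟨t q * (s q)⁻¹, hts q⟩ : φ.ker)
  have hu : ∀ q r, u (q * r) = u q * σ q (u r) := by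
    intro q r
    have hk : (t (q * r))⁻¹ * (t q * t r) ∈ H₁ :=
      hH₂H₁ _ (H₂.mul_mem (H₂.inv_mem (ht _)) (H₂.mul_mem (ht q) (ht r))) (by simp [hφt])
    simp only [u, σ]
    rw [kerQuotientConj_mk, ← QuotientGroup.mk_mul, kerQuotient_mk_eq_mk_iff]
    simp only [MulAut.conjNormal_apply, coe_mul]
    convert H₁.mul_mem (H₁.mul_mem (hs (q * r)) hk) (H₁.inv_mem (H₁.mul_mem (hs q) (hs r)))
      using 1
    group
  obtain ⟨v, hv⟩ := exists_eq_mul_inv_of_cocycle (kerQuotient_pow_eq_one hexp) hcop σ u hu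
  obtain ⟨n, rfl⟩ := QuotientGroup.mk_surjective v
  refine ⟨n, n.2, fun h hh => ?_⟩
  set q : Q := ⟨φ h, mem_map_of_mem φ hh⟩
  refine ⟨s q, hs q, hφs q, ?_⟩
  have hnq := hv q
  simp only [u, σ] at hnq
  rw [kerQuotientConj_mk, ← QuotientGroup.mk_inv, ← QuotientGroup.mk_mul,
    kerQuotient_mk_eq_mk_iff] at hnq
  simp only [MulAut.conjNormal_apply, coe_mul, coe_inv] at hnq
  have hk : (t q)⁻¹ * (n * s q * (n : G)⁻¹) ∈ H₂ := by
    refine hH₁H₂ _ ?_ (by simp [hφs, hφt, MonoidHom.mem_ker.mp n.2])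
    convert H₁.mul_mem (H₁.mul_mem (H₁.inv_mem (hs q)) hnq) (hs q) using 1
    group
  simpa using H₂.mul_mem (ht q) hk

theorem exists_mem_ker_map_conj_eq [IsMulCommutative φ.ker] {e : ℕ}
    (hexp : ∀ x ∈ φ.ker, x ^ e = 1) {H₁ H₂ : Subgroup G} (hker : H₁ ⊓ φ.ker = H₂ ⊓ φ.ker)
    (him : H₁.map φ = H₂.map φ) [Finite (H₁.map φ)] (hcop : (Nat.card (H₁.map φ)).Coprime e) :
    ∃ n ∈ φ.ker, H₁.map (MulAut.conj n).toMonoidHom = H₂ := by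
  obtain ⟨n, hn, hlift⟩ := exists_mem_ker_forall_exists_conj_mem hexp hker him hcop
  have hle :=
    map_conj_le_of_forall_exists_conj_mem (φ := φ) (hker.le.trans inf_le_left) hn hlift
  refine ⟨n, hn, eq_of_le_of_map_le_of_inf_ker_le (φ := φ) hle ?_ ?_⟩
  · have hφn : φ.comp (MulAut.conj n).toMonoidHom = φ := by
      ext x
      simp [MonoidHom.mem_ker.mp hn]
    rw [← him, map_map, hφn]
  · rintro k ⟨hk₂, hk⟩
    refine ⟨k, (hker.ge ⟨hk₂, hk⟩).1, ?_⟩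
    simp [setLike_mul_comm hn hk]

end Subgroup

section KernelOfReduction

variable {p : ℕ}

lemma ZMod.natCast_mul_natCast_self_eq_zero : (p : ZMod (p ^ 2)) * p = 0 := by
  rw [← Nat.cast_mul, ← sq, ZMod.natCast_self]

lemma kerUnit_mul (A B : Matrix (Fin 2) (Fin 2) (ZMod (p ^ 2))) :
    kerUnit A * kerUnit B = kerUnit (A + B) := by
  ext : 1
  simp only [kerUnit, Units.val_mul, add_mul, mul_add, one_mul, mul_one, smul_mul_smul,
    ZMod.natCast_mul_natCast_self_eq_zero, zero_smul, smul_add]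
  abel

lemma kerUnit_zero : kerUnit (0 : Matrix (Fin 2) (Fin 2) (ZMod (p ^ 2))) = 1 := by
  ext : 1
  simp [kerUnit]

lemma kerUnit_pow (A : Matrix (Fin 2) (Fin 2) (ZMod (p ^ 2))) (n : ℕ) :
    kerUnit A ^ n = kerUnit (n • A) := by
  induction n with
  | zero => rw [pow_zero, zero_smul, kerUnit_zero]
  | succ n ih => rw [pow_succ (kerUnit A), ih, kerUnit_mul, succ_nsmul]

lemma exists_natCast_mul_eq_of_red_eq_zero {a : ZMod (p ^ 2)} (ha : red p a = 0) :
    ∃ b, (p : ZMod (p ^ 2)) * b = a := by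
  rw [← ZMod.intCast_zmod_cast a, map_intCast, ZMod.intCast_zmod_eq_zero_iff_dvd] at ha
  obtain ⟨c, hc⟩ := ha
  exact ⟨c, by rw [← ZMod.intCast_zmod_cast a, hc]; push_cast; rfl⟩

lemma exists_kerUnit_eq_of_mem_ker {x : GL2 (p ^ 2)} (hx : x ∈ (phi p).ker) :
    ∃ A, kerUnit A = x := by
  have hred : ∀ i j, red p (((x : Matrix (Fin 2) (Fin 2) (ZMod (p ^ 2))) - 1) i j) = 0 := by
    intro i j
    have := congrArg (fun y : GL2 p => (y : Matrix (Fin 2) (Fin 2) (ZMod p)) i j) hx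
    rw [Matrix.sub_apply, map_sub, sub_eq_zero]
    simpa [phi, Matrix.one_apply, apply_ite] using this
  choose A hA using fun i j => exists_natCast_mul_eq_of_red_eq_zero (hred i j)
  refine ⟨Matrix.of A, Units.ext ?_⟩
  ext i j
  simp [kerUnit, hA]

instance isMulCommutative_ker_phi : IsMulCommutative (phi p).ker :=
  .of_setLike_mul_comm fun x hx y hy => by
    obtain ⟨A, rfl⟩ := exists_kerUnit_eq_of_mem_ker hx
    obtain ⟨B, rfl⟩ := exists_kerUnit_eq_of_mem_ker hy
    rw [kerUnit_mul, kerUnit_mul, add_comm]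

lemma pow_eq_one_of_mem_ker_phi {x : GL2 (p ^ 2)} (hx : x ∈ (phi p).ker) : x ^ p = 1 := by
  obtain ⟨A, rfl⟩ := exists_kerUnit_eq_of_mem_ker hx
  rw [kerUnit_pow, ← kerUnit_zero]
  ext : 1
  simp only [kerUnit, ← Nat.cast_smul_eq_nsmul (ZMod (p ^ 2)), smul_smul,
    ZMod.natCast_mul_natCast_self_eq_zero, zero_smul, smul_zero]

end KernelOfReduction

theorem conjugate_of_eq_ker_and_image_general {p : ℕ} [Fact p.Prime]
    (H₁ H₂ : Subgroup (GL2 (p^2)))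
    (hker : H₁ ⊓ (phi p).ker = H₂ ⊓ (phi p).ker)
    (him : H₁.map (phi p) = H₂.map (phi p))
    (hp' : ¬ p ∣ Nat.card (H₁.map (phi p))) :
    ∃ g : GL2 (p^2), Subgroup.map (MulAut.conj g).toMonoidHom H₁ = H₂ := by
  have hcop : (Nat.card (H₁.map (phi p))).Coprime p :=
    ((Nat.Prime.coprime_iff_not_dvd Fact.out).mpr hp').symm
  obtain ⟨g, -, hg⟩ := Subgroup.exists_mem_ker_map_conj_eq
    (fun _ hx => pow_eq_one_of_mem_ker_phi hx) hker him hcop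
  exact ⟨g, hg⟩

/-- (Schur–Zassenhaus application.) If `H₁ ∩ ker φ = H₂ ∩ ker φ`,
`φ(H₁) = φ(H₂)` and `p ∤ |φ(H₁)|`, then `H₁` and `H₂` are conjugate in `GL₂(ℤ/p²ℤ)`. -/
theorem conjugate_of_eq_ker_and_image {p : ℕ} [Fact p.Prime] (hp : Odd p)
    (H₁ H₂ : Subgroup (GL2 (p^2)))
    (hker : H₁ ⊓ (phi p).ker = H₂ ⊓ (phi p).ker)
    (him : H₁.map (phi p) = H₂.map (phi p))
    (hp' : ¬ p ∣ Nat.card (H₁.map (phi p))) :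
    ∃ g : GL2 (p^2), Subgroup.map (MulAut.conj g).toMonoidHom H₁ = H₂ :=
  conjugate_of_eq_ker_and_image_general H₁ H₂ hker him hp'
end

section
/- Let p be a prime with p > 3 and let H be a subgroup of GL₂(ℤ/p²ℤ) such that φ(H) contains the matrix !![1,1;0,1]. Then H contains the element 1 + p·!![0,1;0,0]. -/
open Matrix

/-! Write `τ = 1 + B` with `B ≡ N := !![0,1;0,0] (mod p)`. Since `N² = 0`, `B² ∈ p·M₂`, hence
`B⁴ = 0`, and in the binomial expansion of `(1 + B)^p` every term with `2 ≤ k < p` carries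
`p²` (from `p ∣ C(p, k)` and `p ∣ B^k`), while `B^p = 0` because `p ≥ 4`.
So `τ^p = 1 + p·B = 1 + p·N`. -/

lemma exists_eq_natCast_mul_of_red_eq_zero {p : ℕ} [NeZero p] {x : ZMod (p ^ 2)}
    (h : red p x = 0) : ∃ y, x = p * y := by
  rw [red, ZMod.castHom_apply, ← ZMod.natCast_val] at h
  obtain ⟨k, hk⟩ := (ZMod.natCast_eq_zero_iff _ _).mp h
  exact ⟨k, by rw [← ZMod.natCast_zmod_val x, hk, Nat.cast_mul]⟩

lemma Matrix.exists_eq_natCast_mul_of_map_red_eq_zero {n : Type*} [Fintype n] [DecidableEq n]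
    {p : ℕ} [NeZero p] {M : Matrix n n (ZMod (p ^ 2))} (h : M.map (red p) = 0) :
    ∃ Y, M = p * Y := by
  choose Y hY using fun i j => exists_eq_natCast_mul_of_red_eq_zero (congrFun₂ h i j)
  refine ⟨Matrix.of Y, ?_⟩
  rw [← nsmul_eq_mul, ← Nat.cast_smul_eq_nsmul (ZMod (p ^ 2))]
  ext i j
  exact hY i j

lemma natCast_mul_mul_natCast_mul_eq_zero {A : Type*} [Semiring A] {q : ℕ}
    (hq2 : (q : A) * q = 0) (x y : A) : q * x * (q * y) = 0 := by
  rw [mul_assoc, ← mul_assoc x, ← Nat.cast_comm, mul_assoc, ← mul_assoc, hq2, zero_mul]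

lemma add_one_pow_prime_of_sq_eq_natCast_mul {A : Type*} [Semiring A] {q : ℕ} (hq : q.Prime)
    (hq3 : 3 < q) (hq2 : (q : A) * q = 0) {B C : A} (hB : B ^ 2 = q * C) :
    (B + 1) ^ q = 1 + q * B := by
  have hB_pow : ∀ m, 2 ≤ m → B ^ m = q * (C * B ^ (m - 2)) := fun m hm => by
    rw [← Nat.add_sub_cancel' hm, pow_add, hB, mul_assoc, Nat.add_sub_cancel_left]
  rw [(Commute.one_right B).add_pow,
    Finset.sum_eq_add_of_mem 0 1 (by simp) (by simp; omega) zero_ne_one]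
  · simp [Nat.cast_comm]
  intro m hm ⟨hm0, hm1⟩
  rw [one_pow, mul_one]
  rcases (Nat.lt_succ_iff.mp (Finset.mem_range.mp hm)).lt_or_eq with hmq | rfl
  · obtain ⟨k, hk⟩ := hq.dvd_choose_self hm0 hmq
    rw [hB_pow m (by omega), hk, Nat.cast_mul, natCast_mul_mul_natCast_mul_eq_zero hq2]
  · rw [← Nat.add_sub_cancel' (by omega : 2 ≤ m), pow_add, hB, hB_pow _ (by omega),
      natCast_mul_mul_natCast_mul_eq_zero hq2, zero_mul]

lemma Matrix.GeneralLinearGroup.val_pow_prime_of_map_red_eq {n : Type*} [Fintype n]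
    [DecidableEq n] {p : ℕ} [Fact p.Prime] (hp3 : 3 < p) {τ : GL n (ZMod (p ^ 2))}
    {N : Matrix n n (ZMod (p ^ 2))} (hN : N * N = 0)
    (hτ : (τ : Matrix n n (ZMod (p ^ 2))).map (red p) = (N + 1).map (red p)) :
    ((τ ^ p : GL n (ZMod (p ^ 2))) : Matrix n n (ZMod (p ^ 2))) =
      1 + (p : Matrix n n (ZMod (p ^ 2))) * N := by
  obtain ⟨Y, hY⟩ : ∃ Y, (τ : Matrix n n (ZMod (p ^ 2))) - (N + 1) = p * Y := by
    apply Matrix.exists_eq_natCast_mul_of_map_red_eq_zero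
    rw [Matrix.map_sub _ (map_sub _), hτ, sub_self]
  have hpp : (p : Matrix n n (ZMod (p ^ 2))) * p = 0 := by
    rw [← Nat.cast_mul, ← sq, ← diagonal_natCast, CharP.cast_eq_zero, diagonal_zero]
  set B := N + p * Y
  have hB2 : B ^ 2 = p * (N * Y + Y * N) := by
    rw [sq B, add_mul, mul_add, mul_add, hN, (Nat.cast_commute p N).symm.left_comm,
      natCast_mul_mul_natCast_mul_eq_zero hpp, add_zero, zero_add, mul_add, mul_assoc]
  rw [Units.val_pow_eq_pow_val, eq_add_of_sub_eq' hY, add_right_comm,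
    add_one_pow_prime_of_sq_eq_natCast_mul Fact.out hp3 hpp hB2, mul_add, ← mul_assoc, hpp,
    zero_mul, add_zero]

/-- Let `p > 3` be prime and `H ≤ GL₂(ℤ/p²ℤ)` with
`!![1,1;0,1] ∈ φ(H)`. Then `1 + p•!![0,1;0,0] ∈ H`. -/
theorem kerUnit_e12_mem {p : ℕ} [Fact p.Prime] (hp3 : 3 < p)
    (H : Subgroup (GL2 (p^2)))
    (hT : ∃ τ ∈ H, (↑(phi p τ) : Matrix (Fin 2) (Fin 2) (ZMod p)) = !![1, 1; 0, 1]) :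
    kerUnit !![0, 1; 0, 0] ∈ H := by
  obtain ⟨τ, hτH, hτ⟩ := hT
  set N : Matrix (Fin 2) (Fin 2) (ZMod (p ^ 2)) := !![0, 1; 0, 0]
  have hN : N * N = 0 := by ext i j; fin_cases i <;> fin_cases j <;> simp [N]
  have hτN : (τ : Matrix (Fin 2) (Fin 2) (ZMod (p ^ 2))).map (red p) = (N + 1).map (red p) := by
    change (phi p τ : Matrix (Fin 2) (Fin 2) (ZMod p)) = _
    rw [hτ]
    ext i j; fin_cases i <;> fin_cases j <;> simp [N]
  have hpow : τ ^ p = kerUnit N := by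
    ext1
    rw [Matrix.GeneralLinearGroup.val_pow_prime_of_map_red_eq hp3 hN hτN]
    change _ = 1 + (p : ZMod (p ^ 2)) • N
    rw [Nat.cast_smul_eq_nsmul, nsmul_eq_mul]
  exact hpow ▸ H.pow_mem hτH p
end

section
/- Let H₁ and H₂ be subgroups of GL₂(ℤ/p²ℤ) such that for each i = 1, 2 every element of φ(Hᵢ) is a scalar matrix (of the form w·1 with w ∈ (ℤ/pℤ)ˣ). Then H₁ and H₂ are nontrivially locally conjugate in GL₂(ℤ/p²ℤ) if and only if φ(H₁) = φ(H₂) and the subgroups H₁ ∩ ker φ and H₂ ∩ ker φ are nontrivially locally conjugate in GL₂(ℤ/p²ℤ). -/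
/-!
If `φ g` is a scalar `w`, write `g = s * k` with `s` a scalar lift of `w` and `k ∈ ker φ`.
Since `ker φ = 1 + p M₂(ℤ/p²ℤ)` has exponent `p` and `w ^ p = w` in `𝔽_p`, `g ^ p = s ^ p` is
central, lifts `φ g`, and depends only on `φ g`. Hence each `Hᵢ` is generated by
`Hᵢ ∩ ker φ` together with central elements `g ^ p` that lie in both `H₁` and `H₂` as soon as
`φ(H₁) = φ(H₂)`; conjugation fixes that central part, so `H₁, H₂` are conjugate iff their
kernel parts are. A local conjugacy `f` of the `Hᵢ` satisfies `φ (f h) = φ h` (conjugates of a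
central element are equal), so it restricts to the kernels; conversely a local conjugacy `e` of
the kernels extends to `h ↦ h ^ p * e ((h ^ p)⁻¹ * h)`.
-/

open Matrix

open Subgroup

section LocalConjugacy

variable {G : Type*} [Group G]

theorem IsConj.eq_of_mem_center {a b : G} (h : IsConj a b) (ha : a ∈ center G) : b = a := by
  obtain ⟨c, rfl⟩ := isConj_iff.mp h
  rw [mem_center_iff.mp ha c, mul_inv_cancel_right]

theorem IsConj.mul_left_of_mem_center {z a b : G} (hz : z ∈ center G) (h : IsConj a b) :
    IsConj (z * a) (z * b) := by
  obtain ⟨c, rfl⟩ := isConj_iff.mp h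
  refine isConj_iff.mpr ⟨c, ?_⟩
  rw [← mul_assoc c, mem_center_iff.mp hz c]
  group

theorem map_conj_eq_of_le_center {C : Subgroup G} (hC : C ≤ center G) (g : G) :
    C.map (MulAut.conj g).toMonoidHom = C := by
  ext x
  have hfix : ∀ c ∈ C, MulAut.conj g c = c := fun c hc => by
    rw [MulAut.conj_apply, mem_center_iff.mp (hC hc) g, mul_inv_cancel_right]
  constructor
  · rintro ⟨c, hc, rfl⟩
    exact (hfix c hc).symm ▸ hc
  · exact fun hx => ⟨x, hx, hfix x hx⟩

theorem IsConjugateSubgroup.sup_left_of_le_center {C H₁ H₂ : Subgroup G} (hC : C ≤ center G)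
    (h : IsConjugateSubgroup H₁ H₂) : IsConjugateSubgroup (C ⊔ H₁) (C ⊔ H₂) := by
  obtain ⟨g, hg⟩ := h
  exact ⟨g, by rw [Subgroup.map_sup, map_conj_eq_of_le_center hC, hg]⟩

theorem IsConjugateSubgroup.inf_normal {H₁ H₂ : Subgroup G} (h : IsConjugateSubgroup H₁ H₂)
    (N : Subgroup G) [N.Normal] : IsConjugateSubgroup (H₁ ⊓ N) (H₂ ⊓ N) := by
  obtain ⟨g, hg⟩ := h
  refine ⟨g, ?_⟩
  rw [Subgroup.map_inf _ _ _ (MulAut.conj g).injective, hg]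
  exact congrArg (H₂ ⊓ ·) (Subgroup.Normal.map_conj_eq (H := N) g)

theorem isLocallyConjugate_inf_of_equiv {H₁ H₂ : Subgroup G} (N : Subgroup G) (f : H₁ ≃ H₂)
    (hf : ∀ h : H₁, IsConj (h : G) (f h)) (hN : ∀ h : H₁, (h : G) ∈ N ↔ (f h : G) ∈ N) :
    IsLocallyConjugate (H₁ ⊓ N) (H₂ ⊓ N) :=
  ⟨(Equiv.subtypeSubtypeEquivSubtypeInter (· ∈ H₁) (· ∈ N)).symm.trans
      ((f.subtypeEquiv hN).trans (Equiv.subtypeSubtypeEquivSubtypeInter (· ∈ H₂) (· ∈ N))),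
    fun h => hf ⟨h, h.2.1⟩⟩

end LocalConjugacy

section CenterHom

variable {G Q : Type*} [Group G] [Group Q] {φ : G →* Q} {H₁ H₂ : Subgroup G}

theorem map_equiv_apply_eq_of_le_center (hc : H₁.map φ ≤ center Q) (f : H₁ ≃ H₂)
    (hf : ∀ h : H₁, IsConj (h : G) (f h)) (h : H₁) : φ (f h) = φ h :=
  (φ.map_isConj (hf h)).eq_of_mem_center (hc ⟨h, h.2, rfl⟩)

theorem IsLocallyConjugate.map_eq_of_le_center (hloc : IsLocallyConjugate H₁ H₂)
    (hc : H₁.map φ ≤ center Q) : H₁.map φ = H₂.map φ := by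
  obtain ⟨f, hf⟩ := hloc
  have hφf := map_equiv_apply_eq_of_le_center hc f hf
  refine le_antisymm ?_ ?_
  · rintro _ ⟨h, hh, rfl⟩
    exact ⟨f ⟨h, hh⟩, (f ⟨h, hh⟩).2, hφf ⟨h, hh⟩⟩
  · rintro _ ⟨h, hh, rfl⟩
    refine ⟨f.symm ⟨h, hh⟩, (f.symm ⟨h, hh⟩).2, ?_⟩
    simpa using (hφf (f.symm ⟨h, hh⟩)).symm

theorem IsLocallyConjugate.inf_ker_of_le_center (hloc : IsLocallyConjugate H₁ H₂)
    (hc : H₁.map φ ≤ center Q) : IsLocallyConjugate (H₁ ⊓ φ.ker) (H₂ ⊓ φ.ker) := by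
  obtain ⟨f, hf⟩ := hloc
  refine isLocallyConjugate_inf_of_equiv φ.ker f hf fun h => ?_
  simp only [MonoidHom.mem_ker, map_equiv_apply_eq_of_le_center hc f hf h]

end CenterHom

/-- For `g` with `φ g` central, `g ^ n` is then central, lifts `φ g` and depends only on `φ g`
(see `IsCentralPowSection.pow_eq_pow_of_map_eq`), so it splits off the central part of `g`. -/
structure IsCentralPowSection {G Q : Type*} [Group G] [Group Q] (φ : G →* Q) (n : ℕ) : Prop where
  pow_eq_one_of_mem_ker : ∀ k ∈ φ.ker, k ^ n = 1
  center_le_map_center : center Q ≤ (center G).map φ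
  pow_eq_self_of_mem_center : ∀ z ∈ center Q, z ^ n = z

namespace IsCentralPowSection

variable {G Q : Type*} [Group G] [Group Q] {φ : G →* Q} {n : ℕ} {H₁ H₂ : Subgroup G}

theorem pow_eq_pow_of_map_eq_of_mem_center (hφ : IsCentralPowSection φ n) {s g : G}
    (hs : s ∈ center G) (hsg : φ s = φ g) : g ^ n = s ^ n := by
  have hk : s⁻¹ * g ∈ φ.ker := by simp [MonoidHom.mem_ker, hsg]
  calc g ^ n = (s * (s⁻¹ * g)) ^ n := by rw [mul_inv_cancel_left]
    _ = s ^ n * (s⁻¹ * g) ^ n := (Commute.mul_pow (mem_center_iff.mp hs _).symm n)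
    _ = s ^ n := by rw [hφ.pow_eq_one_of_mem_ker _ hk, mul_one]

theorem pow_eq_pow_of_map_eq (hφ : IsCentralPowSection φ n) {g g' : G} (hg : φ g ∈ center Q)
    (h : φ g = φ g') : g ^ n = g' ^ n := by
  obtain ⟨s, hs, hsg⟩ := hφ.center_le_map_center hg
  rw [hφ.pow_eq_pow_of_map_eq_of_mem_center hs hsg,
    hφ.pow_eq_pow_of_map_eq_of_mem_center hs (hsg.trans h)]

theorem pow_mem_center (hφ : IsCentralPowSection φ n) {g : G} (hg : φ g ∈ center Q) :
    g ^ n ∈ center G := by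
  obtain ⟨s, hs, hsg⟩ := hφ.center_le_map_center hg
  rw [hφ.pow_eq_pow_of_map_eq_of_mem_center hs hsg]
  exact pow_mem hs n

theorem inv_pow_mul_mem_ker (hφ : IsCentralPowSection φ n) {g : G} (hg : φ g ∈ center Q) :
    (g ^ n)⁻¹ * g ∈ φ.ker := by
  simp [MonoidHom.mem_ker, hφ.pow_eq_self_of_mem_center _ hg]

theorem pow_mem_of_map_le (hφ : IsCentralPowSection φ n) (hle : H₁.map φ ≤ H₂.map φ) {g : G}
    (hg : φ g ∈ center Q) (hgH : g ∈ H₁) : g ^ n ∈ H₂ := by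
  obtain ⟨g', hg'H, hg'⟩ := hle ⟨g, hgH, rfl⟩
  rw [hφ.pow_eq_pow_of_map_eq hg hg'.symm]
  exact pow_mem hg'H n

theorem inf_center_sup_inf_ker (hφ : IsCentralPowSection φ n) (hc : H₁.map φ ≤ center Q)
    (hmap : H₁.map φ = H₂.map φ) : H₁ ⊓ H₂ ⊓ center G ⊔ H₁ ⊓ φ.ker = H₁ := by
  refine le_antisymm (sup_le (inf_le_left.trans inf_le_left) inf_le_left) fun g hg => ?_
  have hgc : φ g ∈ center Q := hc ⟨g, hg, rfl⟩
  rw [← mul_inv_cancel_left (g ^ n) g]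
  have hpow : g ^ n ∈ H₁ ⊓ H₂ ⊓ center G :=
    ⟨⟨pow_mem hg n, hφ.pow_mem_of_map_le hmap.le hgc hg⟩, hφ.pow_mem_center hgc⟩
  have hker : (g ^ n)⁻¹ * g ∈ H₁ ⊓ φ.ker :=
    mem_inf.mpr ⟨mul_mem (inv_mem (pow_mem hg n)) hg, hφ.inv_pow_mul_mem_ker hgc⟩
  exact Subgroup.mul_mem_sup hpow hker

theorem isConjugateSubgroup_of_inf_ker (hφ : IsCentralPowSection φ n)
    (hc : H₁.map φ ≤ center Q) (hmap : H₁.map φ = H₂.map φ)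
    (h : IsConjugateSubgroup (H₁ ⊓ φ.ker) (H₂ ⊓ φ.ker)) : IsConjugateSubgroup H₁ H₂ := by
  have hc₂ : H₂.map φ ≤ center Q := hmap.symm.le.trans hc
  have h₂ : H₁ ⊓ H₂ ⊓ center G ⊔ H₂ ⊓ φ.ker = H₂ := by
    rw [inf_comm H₁ H₂]
    exact hφ.inf_center_sup_inf_ker hc₂ hmap.symm
  have hsup := h.sup_left_of_le_center (C := H₁ ⊓ H₂ ⊓ center G) inf_le_right
  rwa [hφ.inf_center_sup_inf_ker hc hmap, h₂] at hsup

section ExtendKer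

def kerPart (hφ : IsCentralPowSection φ n) (hc : H₁.map φ ≤ center Q) (h : H₁) :
    ↥(H₁ ⊓ φ.ker) :=
  ⟨(h ^ n)⁻¹ * h, mem_inf.mpr ⟨mul_mem (inv_mem (pow_mem h.2 n)) h.2,
    hφ.inv_pow_mul_mem_ker (hc ⟨h, h.2, rfl⟩)⟩⟩

def extendKer (hφ : IsCentralPowSection φ n) (hc : H₁.map φ ≤ center Q)
    (hle : H₁.map φ ≤ H₂.map φ) (e : ↥(H₁ ⊓ φ.ker) ≃ ↥(H₂ ⊓ φ.ker)) (h : H₁) : H₂ :=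
  ⟨h ^ n * e (hφ.kerPart hc h),
    mul_mem (hφ.pow_mem_of_map_le hle (hc ⟨h, h.2, rfl⟩) h.2) (mem_inf.mp (e _).2).1⟩

variable (hφ : IsCentralPowSection φ n) (hc : H₁.map φ ≤ center Q)
  (hle : H₁.map φ ≤ H₂.map φ) (e : ↥(H₁ ⊓ φ.ker) ≃ ↥(H₂ ⊓ φ.ker))

theorem map_extendKer (h : H₁) : φ (hφ.extendKer hc hle e h) = φ h := by
  have hker : φ (e (hφ.kerPart hc h)) = 1 := (mem_inf.mp (e _).2).2
  change φ ((h : G) ^ n * e (hφ.kerPart hc h)) = φ h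
  rw [map_mul, hker, mul_one, map_pow, hφ.pow_eq_self_of_mem_center _ (hc ⟨h, h.2, rfl⟩)]

theorem pow_extendKer (h : H₁) : (hφ.extendKer hc hle e h : G) ^ n = (h : G) ^ n :=
  (hφ.pow_eq_pow_of_map_eq (hc ⟨h, h.2, rfl⟩) (hφ.map_extendKer hc hle e h).symm).symm

theorem kerPart_extendKer (hc₂ : H₂.map φ ≤ center Q) (h : H₁) :
    hφ.kerPart hc₂ (hφ.extendKer hc hle e h) = e (hφ.kerPart hc h) := by
  ext
  change ((hφ.extendKer hc hle e h : G) ^ n)⁻¹ * ((h : G) ^ n * e (hφ.kerPart hc h)) = _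
  rw [hφ.pow_extendKer, inv_mul_cancel_left]

theorem extendKer_symm_extendKer (hc₂ : H₂.map φ ≤ center Q) (hle' : H₂.map φ ≤ H₁.map φ)
    (h : H₁) : hφ.extendKer hc₂ hle' e.symm (hφ.extendKer hc hle e h) = h := by
  ext
  change (hφ.extendKer hc hle e h : G) ^ n *
    e.symm (hφ.kerPart hc₂ (hφ.extendKer hc hle e h)) = h
  rw [hφ.kerPart_extendKer, Equiv.symm_apply_apply, hφ.pow_extendKer]
  exact mul_inv_cancel_left _ _

theorem isConj_extendKer (he : ∀ k : ↥(H₁ ⊓ φ.ker), IsConj (k : G) (e k)) (h : H₁) :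
    IsConj (h : G) (hφ.extendKer hc hle e h) := by
  have hcen := hφ.pow_mem_center (hc ⟨h, h.2, rfl⟩)
  have := (he (hφ.kerPart hc h)).mul_left_of_mem_center hcen
  rwa [show ((h : G) ^ n * (hφ.kerPart hc h : G)) = h from mul_inv_cancel_left _ _] at this

end ExtendKer

theorem isLocallyConjugate_of_inf_ker (hφ : IsCentralPowSection φ n)
    (hc₁ : H₁.map φ ≤ center Q) (hc₂ : H₂.map φ ≤ center Q) (hmap : H₁.map φ = H₂.map φ)
    (h : IsLocallyConjugate (H₁ ⊓ φ.ker) (H₂ ⊓ φ.ker)) : IsLocallyConjugate H₁ H₂ := by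
  obtain ⟨e, he⟩ := h
  exact ⟨⟨hφ.extendKer hc₁ hmap.le e, hφ.extendKer hc₂ hmap.ge e.symm,
      hφ.extendKer_symm_extendKer hc₁ hmap.le e hc₂ hmap.ge,
      hφ.extendKer_symm_extendKer hc₂ hmap.ge e.symm hc₁ hmap.le⟩,
    hφ.isConj_extendKer hc₁ hmap.le e he⟩

theorem isNontriviallyLocallyConjugate_iff (hφ : IsCentralPowSection φ n)
    (hc₁ : H₁.map φ ≤ center Q) (hc₂ : H₂.map φ ≤ center Q) :
    IsNontriviallyLocallyConjugate H₁ H₂ ↔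
      H₁.map φ = H₂.map φ ∧ IsNontriviallyLocallyConjugate (H₁ ⊓ φ.ker) (H₂ ⊓ φ.ker) := by
  constructor
  · rintro ⟨hloc, hnconj⟩
    have hmap := hloc.map_eq_of_le_center hc₁
    exact ⟨hmap, hloc.inf_ker_of_le_center hc₁,
      fun hconj => hnconj (hφ.isConjugateSubgroup_of_inf_ker hc₁ hmap hconj)⟩
  · rintro ⟨hmap, hloc, hnconj⟩
    exact ⟨hφ.isLocallyConjugate_of_inf_ker hc₁ hc₂ hmap hloc,
      fun hconj => hnconj (hconj.inf_normal φ.ker)⟩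

end IsCentralPowSection

theorem one_add_pow_of_mul_self_eq_zero {R : Type*} [Semiring R] {x : R} (hx : x * x = 0)
    (m : ℕ) : (1 + x) ^ m = 1 + m • x := by
  induction m with
  | zero => simp
  | succ m ih =>
    rw [pow_succ, ih, add_mul, one_mul, mul_add, mul_one, smul_mul_assoc, hx, smul_zero,
      add_zero, succ_nsmul]
    abel

theorem map_le_center_of_forall_val_eq_smul_one {G ι R : Type*} [Group G] [Fintype ι]
    [DecidableEq ι] [CommRing R] (f : G →* GL ι R) {H : Subgroup G}
    (h : ∀ g ∈ H, ∃ w : Rˣ, (f g : Matrix ι ι R) = (w : R) • 1) : H.map f ≤ center (GL ι R) := by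
  rintro _ ⟨g, hg, rfl⟩
  obtain ⟨w, hw⟩ := h g hg
  exact GeneralLinearGroup.mem_center_iff_val_mem_range_scalar.mpr
    ⟨w, by rw [hw, smul_one_eq_diagonal, scalar_apply]⟩

theorem pow_card_eq_self_of_mem_center {ι : Type*} [Fintype ι] [DecidableEq ι] {p : ℕ}
    [Fact p.Prime] {z : GL ι (ZMod p)} (hz : z ∈ center (GL ι (ZMod p))) : z ^ p = z := by
  rw [GeneralLinearGroup.center_eq_range_scalar] at hz
  obtain ⟨w, rfl⟩ := hz
  have hw : w ^ p = w := Units.ext (by rw [Units.val_pow_eq_pow_val, ZMod.pow_card])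
  rw [← map_pow, hw]

theorem center_le_map_center_map_castHom {ι : Type*} [Fintype ι] [DecidableEq ι] {m d : ℕ}
    [NeZero m] (h : d ∣ m) : center (GL ι (ZMod d)) ≤
      (center (GL ι (ZMod m))).map (GeneralLinearGroup.map (ZMod.castHom h (ZMod d))) := by
  intro z hz
  rw [GeneralLinearGroup.center_eq_range_scalar] at hz
  obtain ⟨w, rfl⟩ := hz
  obtain ⟨c, rfl⟩ := ZMod.unitsMap_surjective h w
  refine ⟨GeneralLinearGroup.scalar ι c, ?_, GeneralLinearGroup.map_scalar _ _⟩
  rw [GeneralLinearGroup.center_eq_range_scalar]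
  exact ⟨c, rfl⟩

section Phi

variable {p : ℕ}

theorem natCast_dvd_of_red_eq_zero {x : ZMod (p ^ 2)} (h : red p x = 0) :
    (p : ZMod (p ^ 2)) ∣ x := by
  obtain ⟨m, rfl⟩ := ZMod.intCast_surjective x
  rw [red, map_intCast, ZMod.intCast_zmod_eq_zero_iff_dvd] at h
  obtain ⟨t, rfl⟩ := h
  exact ⟨t, by push_cast; ring⟩

theorem exists_eq_kerUnit_of_mem_ker {k : GL2 (p ^ 2)} (hk : k ∈ (phi p).ker) :
    ∃ A, k = kerUnit A := by
  have hdvd : ∀ i j, (p : ZMod (p ^ 2)) ∣ (k.val - 1) i j := fun i j =>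
    natCast_dvd_of_red_eq_zero (by
      have h1 : ((phi p k : GL2 p) : Matrix (Fin 2) (Fin 2) (ZMod p)) = 1 := by
        rw [MonoidHom.mem_ker.mp hk]; rfl
      have := congr_fun₂ h1 i j
      by_cases hij : i = j
      · subst hij; simpa [phi, sub_eq_zero] using this
      · simpa [phi, Matrix.one_apply_ne hij] using this)
  choose A hA using hdvd
  exact ⟨Matrix.of A, Units.ext (by ext i j; simp [kerUnit, ← hA])⟩

theorem kerUnit_pow_self (A : Matrix (Fin 2) (Fin 2) (ZMod (p ^ 2))) : kerUnit A ^ p = 1 := by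
  have hsq : ((p : ZMod (p ^ 2)) • A) * ((p : ZMod (p ^ 2)) • A) = 0 := by
    rw [smul_mul_smul_comm, ← pow_two, ← Nat.cast_pow, ZMod.natCast_self, zero_smul]
  ext : 1
  rw [Units.val_pow_eq_pow_val, kerUnit, one_add_pow_of_mul_self_eq_zero hsq,
    ← Nat.cast_smul_eq_nsmul (ZMod (p ^ 2)), smul_smul, ← pow_two, ← Nat.cast_pow,
    ZMod.natCast_self, zero_smul, add_zero, Units.val_one]

end Phi

theorem isCentralPowSection_phi (p : ℕ) [Fact p.Prime] : IsCentralPowSection (phi p) p where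
  pow_eq_one_of_mem_ker k hk := by
    obtain ⟨A, rfl⟩ := exists_eq_kerUnit_of_mem_ker hk
    exact kerUnit_pow_self A
  center_le_map_center := center_le_map_center_map_castHom (dvd_pow_self p two_ne_zero)
  pow_eq_self_of_mem_center _ := pow_card_eq_self_of_mem_center

theorem center_case_general {p : ℕ} [Fact p.Prime]
    (H₁ H₂ : Subgroup (GL2 (p^2)))
    (h₁ : ∀ g ∈ H₁, ∃ w : (ZMod p)ˣ,
      (↑(phi p g) : Matrix (Fin 2) (Fin 2) (ZMod p)) = (w : ZMod p) • 1)
    (h₂ : ∀ g ∈ H₂, ∃ w : (ZMod p)ˣ,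
      (↑(phi p g) : Matrix (Fin 2) (Fin 2) (ZMod p)) = (w : ZMod p) • 1) :
    IsNontriviallyLocallyConjugate H₁ H₂ ↔
      (H₁.map (phi p) = H₂.map (phi p) ∧
        IsNontriviallyLocallyConjugate (H₁ ⊓ (phi p).ker) (H₂ ⊓ (phi p).ker)) := by
  exact (isCentralPowSection_phi p).isNontriviallyLocallyConjugate_iff
    (map_le_center_of_forall_val_eq_smul_one (phi p) h₁)
    (map_le_center_of_forall_val_eq_smul_one (phi p) h₂)

/-- (The center case.) Suppose every element of `φ(Hᵢ)` is a scalar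
matrix `w • 1` with `w ∈ (ℤ/pℤ)ˣ`. Then `H₁` and `H₂` are nontrivially locally
conjugate in `GL₂(ℤ/p²ℤ)` iff `φ(H₁) = φ(H₂)` and `H₁ ∩ ker φ` and `H₂ ∩ ker φ` are
nontrivially locally conjugate in `GL₂(ℤ/p²ℤ)`. -/
theorem center_case {p : ℕ} [Fact p.Prime] (hp : Odd p)
    (H₁ H₂ : Subgroup (GL2 (p^2)))
    (h₁ : ∀ g ∈ H₁, ∃ w : (ZMod p)ˣ,
      (↑(phi p g) : Matrix (Fin 2) (Fin 2) (ZMod p)) = (w : ZMod p) • 1)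
    (h₂ : ∀ g ∈ H₂, ∃ w : (ZMod p)ˣ,
      (↑(phi p g) : Matrix (Fin 2) (Fin 2) (ZMod p)) = (w : ZMod p) • 1) :
    IsNontriviallyLocallyConjugate H₁ H₂ ↔
      (H₁.map (phi p) = H₂.map (phi p) ∧
        IsNontriviallyLocallyConjugate (H₁ ⊓ (phi p).ker) (H₂ ⊓ (phi p).ker)) :=
  center_case_general H₁ H₂ h₁ h₂
end

section
/- For i = 1, 2 let nᵢ, aᵢ, bᵢ, cᵢ, dᵢ ∈ ℤ/p²ℤ with nᵢ ≢ 0 (mod p), and let gᵢ = !![1, nᵢ; 0, 1] + p·!![aᵢ, bᵢ; cᵢ, dᵢ], an element of GL₂(ℤ/p²ℤ). Then g₁ and g₂ are conjugate in GL₂(ℤ/p²ℤ) if and only if a₁ + d₁ ≡ a₂ + d₂ (mod p) and c₁·n₁ ≡ c₂·n₂ (mod p). -/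
open Matrix

/-!
Let `ε` be an element of a commutative ring with `ε² = 0` (here `ε = p` in `ℤ/p²ℤ`) and `g = U + ε M`
with `U = !![1, n; 0, 1]`, `n` a unit and `M = !![a, b; c, d]`. Its trace `2 + ε (a + d)` and determinant
`1 + ε (a + d) - ε c n` are conjugation invariants, which gives necessity. Conversely, conjugating by
`diag(1, n)` makes `n = 1`, and conjugating by `1 + ε X` replaces `M` by `M + [X, U]`; a suitable `X`
reduces `g` to `!![1 + ε (a + d), 1; ε c n, 1]`, which depends only on `ε (a + d)` and `ε c n`.
Finally `p x = p y` in `ℤ/p²ℤ` iff `x ≡ y (mod p)`.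
-/

theorem Units.isConj_val_iff {M : Type*} [Monoid M] {u v : Mˣ} :
    IsConj (u : M) v ↔ IsConj u v := by
  refine ⟨fun ⟨c, hc⟩ => isConj_iff.mpr ⟨c, Units.ext ?_⟩, (Units.coeHom M).map_isConj⟩
  simp [hc.eq]

namespace Matrix

variable {m R : Type*} [Fintype m] [DecidableEq m] [CommRing R]

theorem IsConj.trace_eq {A B : Matrix m m R} (h : IsConj A B) : trace A = trace B := by
  obtain ⟨c, hc⟩ := h
  rw [← trace_units_conj c A, hc.eq, Units.mul_inv_cancel_right]

theorem IsConj.det_eq {A B : Matrix m m R} (h : IsConj A B) : det A = det B := by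
  obtain ⟨c, hc⟩ := h
  rw [← det_units_conj c A, hc.eq, Units.mul_inv_cancel_right]

theorem isConj_add_smul_add_commutator {ε : R} (hε : ε * ε = 0) (U M X : Matrix m m R) :
    IsConj (U + ε • M) (U + ε • (M + X * U - U * X)) := by
  have hnil : IsNilpotent (ε • X) := ⟨2, by rw [sq, smul_mul_smul_comm, hε, zero_smul]⟩
  refine ⟨hnil.isUnit_one_add.unit, ?_⟩
  have hεε : ∀ A : Matrix m m R, ε • ε • A = 0 := fun A => by rw [smul_smul, hε, zero_smul]
  simp only [SemiconjBy, IsUnit.unit_spec, mul_add, add_mul, sub_mul, one_mul, mul_one, smul_add,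
    smul_sub, smul_mul_assoc, mul_smul_comm, hεε, add_zero]
  abel

theorem trace_unipotent_add_smul (ε n a b c d : R) :
    trace (!![1, n; 0, 1] + ε • !![a, b; c, d]) = 2 + ε * (a + d) := by
  simp [trace_fin_two]
  ring

theorem det_unipotent_add_smul {ε : R} (hε : ε * ε = 0) (n a b c d : R) :
    det (!![1, n; 0, 1] + ε • !![a, b; c, d]) = 1 + ε * (a + d) - ε * (c * n) := by
  simp [det_fin_two]
  linear_combination (a * d - b * c) * hε

theorem isConj_unipotent_add_smul_rescale (ε : R) (n : Rˣ) (a b c d : R) :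
    IsConj (!![1, (n : R); 0, 1] + ε • !![a, b * n; c, d])
      (!![1, 1; 0, 1] + ε • !![a, b; c * n, d]) := by
  have hD : IsUnit !![1, 0; 0, (n : R)] := by simp [isUnit_iff_isUnit_det, det_fin_two]
  refine ⟨hD.unit, ?_⟩
  ext i j
  fin_cases i <;> fin_cases j <;> simp [mul_apply, Fin.sum_univ_succ] <;> ring

theorem isConj_unipotent_add_smul_normalForm {ε : R} (hε : ε * ε = 0) {n : R} (hn : IsUnit n)
    (a b c d : R) :
    IsConj (!![1, n; 0, 1] + ε • !![a, b; c, d])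
      !![1 + ε * (a + d), 1; ε * (c * n), 1] := by
  obtain ⟨n, rfl⟩ := hn
  have hdiag := isConj_unipotent_add_smul_rescale ε n a (b * ↑n⁻¹) c d
  rw [Units.inv_mul_cancel_right] at hdiag
  refine hdiag.trans ?_
  convert isConj_add_smul_add_commutator hε _ _ !![-(b * ↑n⁻¹), 0; -d, 0] using 1
  ext i j
  fin_cases i <;> fin_cases j <;> simp
  ring

theorem isConj_unipotent_add_smul_iff {ε : R} (hε : ε * ε = 0) {n₁ n₂ : R} (hn₁ : IsUnit n₁)
    (hn₂ : IsUnit n₂) (a₁ b₁ c₁ d₁ a₂ b₂ c₂ d₂ : R) :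
    IsConj (!![1, n₁; 0, 1] + ε • !![a₁, b₁; c₁, d₁]) (!![1, n₂; 0, 1] + ε • !![a₂, b₂; c₂, d₂]) ↔
      ε * (a₁ + d₁) = ε * (a₂ + d₂) ∧ ε * (c₁ * n₁) = ε * (c₂ * n₂) := by
  constructor
  · intro h
    have htr := h.trace_eq
    have hdet := h.det_eq
    rw [trace_unipotent_add_smul, trace_unipotent_add_smul] at htr
    rw [det_unipotent_add_smul hε, det_unipotent_add_smul hε] at hdet
    exact ⟨add_left_cancel htr, by linear_combination htr - hdet⟩
  · rintro ⟨hs, ht⟩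
    refine (isConj_unipotent_add_smul_normalForm hε hn₁ a₁ b₁ c₁ d₁).trans ?_
    rw [hs, ht]
    exact (isConj_unipotent_add_smul_normalForm hε hn₂ a₂ b₂ c₂ d₂).symm

end Matrix

theorem red_eq_zero_iff {p : ℕ} [NeZero p] (x : ZMod (p ^ 2)) :
    red p x = 0 ↔ (p : ZMod (p ^ 2)) * x = 0 := by
  obtain ⟨k, rfl⟩ := ZMod.natCast_zmod_surjective x
  rw [map_natCast, ← Nat.cast_mul, ZMod.natCast_eq_zero_iff, ZMod.natCast_eq_zero_iff, sq,
    Nat.mul_dvd_mul_iff_left (NeZero.pos p)]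

theorem red_eq_red_iff {p : ℕ} [NeZero p] (x y : ZMod (p ^ 2)) :
    red p x = red p y ↔ (p : ZMod (p ^ 2)) * x = p * y := by
  rw [← sub_eq_zero, ← map_sub, red_eq_zero_iff, mul_sub, sub_eq_zero]

theorem isUnit_of_red_ne_zero {p : ℕ} [hp : Fact p.Prime] {x : ZMod (p ^ 2)} (hx : red p x ≠ 0) :
    IsUnit x := by
  obtain ⟨k, rfl⟩ := ZMod.natCast_zmod_surjective x
  rw [map_natCast, Ne, ZMod.natCast_eq_zero_iff, ← hp.out.coprime_iff_not_dvd] at hx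
  exact (ZMod.isUnit_iff_coprime k _).mpr (hx.symm.pow_right 2)

theorem conj_class_unipotent_general {p : ℕ} [Fact p.Prime]
    (n₁ n₂ a₁ b₁ c₁ d₁ a₂ b₂ c₂ d₂ : ZMod (p^2))
    (hn₁ : red p n₁ ≠ 0) (hn₂ : red p n₂ ≠ 0)
    (g₁ g₂ : GL2 (p^2))
    (hg₁ : (↑g₁ : Matrix (Fin 2) (Fin 2) (ZMod (p^2))) =
      !![1, n₁; 0, 1] + (p : ZMod (p^2)) • !![a₁, b₁; c₁, d₁])
    (hg₂ : (↑g₂ : Matrix (Fin 2) (Fin 2) (ZMod (p^2))) =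
      !![1, n₂; 0, 1] + (p : ZMod (p^2)) • !![a₂, b₂; c₂, d₂]) :
    IsConj g₁ g₂ ↔
      (red p (a₁ + d₁) = red p (a₂ + d₂) ∧ red p (c₁ * n₁) = red p (c₂ * n₂)) := by
  have hp2 : (p : ZMod (p ^ 2)) * p = 0 := by rw [← Nat.cast_mul, ← sq, ZMod.natCast_self]
  rw [← Units.isConj_val_iff, hg₁, hg₂, red_eq_red_iff, red_eq_red_iff]
  exact isConj_unipotent_add_smul_iff hp2 (isUnit_of_red_ne_zero hn₁) (isUnit_of_red_ne_zero hn₂) ..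

/-- For `i = 1, 2`, let `gᵢ = !![1, nᵢ; 0, 1] + p•!![aᵢ,bᵢ;cᵢ,dᵢ]` in
`GL₂(ℤ/p²ℤ)` with `nᵢ ≢ 0 (mod p)`. Then `g₁` and `g₂` are conjugate in `GL₂(ℤ/p²ℤ)`
iff `a₁ + d₁ ≡ a₂ + d₂ (mod p)` and `c₁ n₁ ≡ c₂ n₂ (mod p)`. -/
theorem conj_class_unipotent {p : ℕ} [Fact p.Prime] (hp : Odd p)
    (n₁ n₂ a₁ b₁ c₁ d₁ a₂ b₂ c₂ d₂ : ZMod (p^2))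
    (hn₁ : red p n₁ ≠ 0) (hn₂ : red p n₂ ≠ 0)
    (g₁ g₂ : GL2 (p^2))
    (hg₁ : (↑g₁ : Matrix (Fin 2) (Fin 2) (ZMod (p^2))) =
      !![1, n₁; 0, 1] + (p : ZMod (p^2)) • !![a₁, b₁; c₁, d₁])
    (hg₂ : (↑g₂ : Matrix (Fin 2) (Fin 2) (ZMod (p^2))) =
      !![1, n₂; 0, 1] + (p : ZMod (p^2)) • !![a₂, b₂; c₂, d₂]) :
    IsConj g₁ g₂ ↔
      (red p (a₁ + d₁) = red p (a₂ + d₂) ∧ red p (c₁ * n₁) = red p (c₂ * n₂)) :=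
  conj_class_unipotent_general n₁ n₂ a₁ b₁ c₁ d₁ a₂ b₂ c₂ d₂ hn₁ hn₂ g₁ g₂ hg₁ hg₂
end
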